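/- Let Q₁, Q₂ be probability measures and let Q₁ = ⊗_{s∈S} Q₁,s and Q₂ = ⊗_{s∈S} Q₂,s be finite products where each Q₁,s = Bern(1/2 − δ_s), Q₂,s = Bern(1/2 + δ_s) with 0 ≤ δ_s ≤ 1/4. If ∑_{s∈S} δ_s² ≤ γ² with 12γ² ≤ 1, then TV(Q₁, Q₂) ≤ √(6 ∑_s δ_s²) ≤ √6·γ. -/

import Mathlib

open MeasureTheory Finset

/-- The Bernoulli measure on Bool with success probability p. -/
noncomputable def bernMeasure (p : ℝ) : Measure Bool :=
  (ENNReal.ofReal p) • Measure.dirac true + (ENNReal.ofReal (1 - p)) • Measure.dirac false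

instance bernMeasure_finite (p : ℝ) : IsFiniteMeasure (bernMeasure p) := by
  constructor
  simp only [bernMeasure, Measure.add_apply, Measure.smul_apply, smul_eq_mul,
    Measure.dirac_apply_of_mem (Set.mem_univ _)]
  simp [ENNReal.add_lt_top, ENNReal.ofReal_lt_top]

/-- Total variation distance between two measures. -/
noncomputable def tvDist {α : Type*} [MeasurableSpace α] (P Q : Measure α) : ℝ :=
  sSup {r : ℝ | ∃ s : Set α, MeasurableSet s ∧ r = |(P s).toReal - (Q s).toReal|}

/-!
Instead of the KL chain rule and Pinsker, we go through the Bhattacharyya coefficient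
`B(P, Q) = ∑ₓ √(P{x} Q{x})`. Writing `|p - q| = |√p - √q| (√p + √q)`, Cauchy–Schwarz gives
`(∑ |p - q|)² ≤ (2 - 2B)(2 + 2B)`, hence `TV(P, Q) ≤ √(1 - B²)`. The coefficient is
multiplicative over product measures and equals `√(1 - 4δ²)` for the pair
`Bern(1/2 - δ), Bern(1/2 + δ)`, so `1 - B² = 1 - ∏ₛ (1 - 4δₛ²) ≤ 4 ∑ₛ δₛ²`.
-/

theorem one_sub_sum_le_prod_one_sub {R ι : Type*} [CommRing R] [LinearOrder R]
    [IsStrictOrderedRing R] (s : Finset ι) {a : ι → R} (h0 : ∀ i ∈ s, 0 ≤ a i)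
    (h1 : ∀ i ∈ s, a i ≤ 1) : 1 - ∑ i ∈ s, a i ≤ ∏ i ∈ s, (1 - a i) := by
  classical
  induction s using Finset.induction_on with
  | empty => simp
  | insert i s hi ih =>
    rw [prod_insert hi, sum_insert hi]
    have hai1 := h1 i (mem_insert_self i s)
    have hs := ih (fun j hj => h0 j (mem_insert_of_mem hj)) fun j hj => h1 j (mem_insert_of_mem hj)
    have hsum : 0 ≤ ∑ j ∈ s, a j := sum_nonneg fun j hj => h0 j (mem_insert_of_mem hj)
    nlinarith [h0 i (mem_insert_self i s), mul_le_mul_of_nonneg_left hs (sub_nonneg.2 hai1)]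

section Finite

variable {α : Type*} [Fintype α]

theorem two_mul_abs_sum_le_sum_abs_of_sum_eq_zero {d : α → ℝ} (hd : ∑ x, d x = 0)
    (T : Finset α) : 2 * |∑ x ∈ T, d x| ≤ ∑ x, |d x| := by
  classical
  have hTc := abs_sum_le_sum_abs d Tᶜ
  rw [show ∑ x ∈ Tᶜ, d x = -∑ x ∈ T, d x by linarith [sum_add_sum_compl T d], abs_neg] at hTc
  linarith [abs_sum_le_sum_abs d T, sum_add_sum_compl T fun x => |d x|]

theorem sq_sum_abs_sq_sub_sq_le {a b : α → ℝ} (ha : ∑ x, a x ^ 2 = 1) (hb : ∑ x, b x ^ 2 = 1) :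
    (∑ x, |a x ^ 2 - b x ^ 2|) ^ 2 ≤ 4 * (1 - (∑ x, a x * b x) ^ 2) := by
  set S := ∑ x, a x * b x
  have hminus : ∑ x, (a x - b x) ^ 2 = 2 - 2 * S := by
    simp only [sub_sq, sum_add_distrib, sum_sub_distrib, ha, hb, mul_assoc, ← mul_sum, S]
    ring
  have hplus : ∑ x, (a x + b x) ^ 2 = 2 + 2 * S := by
    simp only [add_sq, sum_add_distrib, ha, hb, mul_assoc, ← mul_sum, S]
    ring
  calc (∑ x, |a x ^ 2 - b x ^ 2|) ^ 2 = (∑ x, |a x - b x| * |a x + b x|) ^ 2 := by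
        simp only [← abs_mul, sq_sub_sq, mul_comm]
    _ ≤ (∑ x, |a x - b x| ^ 2) * ∑ x, |a x + b x| ^ 2 := sum_mul_sq_le_sq_mul_sq _ _ _
    _ = 4 * (1 - S ^ 2) := by simp only [sq_abs, hminus, hplus]; ring

variable [MeasurableSpace α]

noncomputable def bhattacharyya (P Q : Measure α) : ℝ :=
  ∑ x, √(P.real {x} * Q.real {x})

theorem abs_measureReal_sub_le_sqrt [MeasurableSingletonClass α] (P Q : Measure α)
    [IsProbabilityMeasure P] [IsProbabilityMeasure Q] (A : Set α) :
    |P.real A - Q.real A| ≤ √(1 - bhattacharyya P Q ^ 2) := by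
  classical
  have hsq (μ : Measure α) (x : α) : √(μ.real {x}) ^ 2 = μ.real {x} :=
    Real.sq_sqrt measureReal_nonneg
  have hunit (μ : Measure α) [IsProbabilityMeasure μ] : ∑ x, √(μ.real {x}) ^ 2 = 1 := by
    simp [hsq]
  have hCS := sq_sum_abs_sq_sub_sq_le (hunit P) (hunit Q)
  simp only [hsq, ← Real.sqrt_mul measureReal_nonneg] at hCS
  have hA : P.real A - Q.real A = ∑ x ∈ A.toFinset, (P.real {x} - Q.real {x}) := by
    simp [sum_sub_distrib]
  have hhalf := two_mul_abs_sum_le_sum_abs_of_sum_eq_zero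
    (d := fun x => P.real {x} - Q.real {x}) (by simp [sum_sub_distrib]) A.toFinset
  rw [hA, bhattacharyya]
  apply Real.le_sqrt_of_sq_le
  nlinarith [pow_le_pow_left₀ (by positivity) hhalf 2]

end Finite

theorem bhattacharyya_pi {ι : Type*} [Fintype ι] [DecidableEq ι] {α : ι → Type*}
    [∀ i, Fintype (α i)] [∀ i, MeasurableSpace (α i)] (P Q : ∀ i, Measure (α i))
    [∀ i, SigmaFinite (P i)] [∀ i, SigmaFinite (Q i)] :
    bhattacharyya (Measure.pi P) (Measure.pi Q) = ∏ i, bhattacharyya (P i) (Q i) := by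
  simp only [bhattacharyya, Fintype.prod_sum]
  refine sum_congr rfl fun x _ => ?_
  simp only [measureReal_def, Measure.pi_singleton, ENNReal.toReal_prod, ← prod_mul_distrib]
  exact Real.sqrt_prod _ fun i _ => by positivity

theorem tvDist_le {β : Type*} [MeasurableSpace β] {P Q : Measure β} {c : ℝ} (hc : 0 ≤ c)
    (h : ∀ s, MeasurableSet s → |(P s).toReal - (Q s).toReal| ≤ c) : tvDist P Q ≤ c :=
  Real.sSup_le (by rintro r ⟨s, hs, rfl⟩; exact h s hs) hc

section Bernoulli

variable {p : ℝ}

theorem bernMeasure_real_true (hp : 0 ≤ p) : (bernMeasure p).real {true} = p := by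
  simp [bernMeasure, measureReal_def, hp]

theorem bernMeasure_real_false (hp : p ≤ 1) : (bernMeasure p).real {false} = 1 - p := by
  simp [bernMeasure, measureReal_def, hp]

theorem isProbabilityMeasure_bernMeasure (hp0 : 0 ≤ p) (hp1 : p ≤ 1) :
    IsProbabilityMeasure (bernMeasure p) := by
  constructor
  simp [bernMeasure, ← ENNReal.ofReal_add hp0 (sub_nonneg.2 hp1)]

theorem bhattacharyya_bernMeasure_half_sub_half_add {δ : ℝ} (hδ : |δ| ≤ 1 / 2) :
    bhattacharyya (bernMeasure (1 / 2 - δ)) (bernMeasure (1 / 2 + δ)) = √(1 - 4 * δ ^ 2) := by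
  obtain ⟨hlo, hhi⟩ := abs_le.1 hδ
  simp only [bhattacharyya, Fintype.sum_bool]
  rw [bernMeasure_real_true (by linarith), bernMeasure_real_true (by linarith),
    bernMeasure_real_false (by linarith), bernMeasure_real_false (by linarith)]
  rw [show 1 - 4 * δ ^ 2 = 2 ^ 2 * ((1 / 2 - δ) * (1 / 2 + δ)) by ring,
    Real.sqrt_mul (show (0 : ℝ) ≤ 2 ^ 2 by positivity), Real.sqrt_sq (by norm_num)]
  ring_nf

end Bernoulli

theorem tv_product_bernoulli_general {ι : Type*} [Fintype ι] (δ : ι → ℝ) (γ : ℝ)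
    (hδ0 : ∀ s, 0 ≤ δ s) (hδ1 : ∀ s, δ s ≤ 1/4)
    (hγ0 : 0 ≤ γ) (hsum : ∑ s, δ s ^ 2 ≤ γ ^ 2) :
    tvDist (Measure.pi fun s : ι => bernMeasure (1/2 - δ s))
        (Measure.pi fun s : ι => bernMeasure (1/2 + δ s))
      ≤ Real.sqrt (6 * ∑ s, δ s ^ 2) ∧
    Real.sqrt (6 * ∑ s, δ s ^ 2) ≤ Real.sqrt 6 * γ := by
  classical
  have hδ s : |δ s| ≤ 1 / 2 := abs_le.2 ⟨by linarith [hδ0 s], by linarith [hδ1 s]⟩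
  have hδsq s : 4 * δ s ^ 2 ≤ 1 := by nlinarith [hδ0 s, hδ1 s]
  have _ : ∀ s, IsProbabilityMeasure (bernMeasure (1 / 2 - δ s)) := fun s =>
    isProbabilityMeasure_bernMeasure (by linarith [hδ1 s]) (by linarith [hδ0 s])
  have _ : ∀ s, IsProbabilityMeasure (bernMeasure (1 / 2 + δ s)) := fun s =>
    isProbabilityMeasure_bernMeasure (by linarith [hδ0 s]) (by linarith [hδ1 s])
  have hB : bhattacharyya (Measure.pi fun s => bernMeasure (1 / 2 - δ s))
      (Measure.pi fun s => bernMeasure (1 / 2 + δ s)) ^ 2 = ∏ s, (1 - 4 * δ s ^ 2) := by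
    rw [bhattacharyya_pi, ← prod_pow]
    exact prod_congr rfl fun s _ => by
      rw [bhattacharyya_bernMeasure_half_sub_half_add (hδ s), Real.sq_sqrt (by linarith [hδsq s])]
  have hprod : 1 - 4 * ∑ s, δ s ^ 2 ≤ ∏ s, (1 - 4 * δ s ^ 2) := by
    simpa only [mul_sum] using
      one_sub_sum_le_prod_one_sub univ (fun s _ => by positivity) fun s _ => hδsq s
  have hsum0 : 0 ≤ ∑ s, δ s ^ 2 := sum_nonneg fun s _ => sq_nonneg _
  refine ⟨tvDist_le (Real.sqrt_nonneg _) fun A _ => ?_, ?_⟩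
  · calc _ ≤ _ := abs_measureReal_sub_le_sqrt _ _ A
      _ ≤ _ := Real.sqrt_le_sqrt (by rw [hB]; linarith)
  · calc Real.sqrt (6 * ∑ s, δ s ^ 2) ≤ Real.sqrt (6 * γ ^ 2) := by gcongr
      _ = Real.sqrt 6 * γ := by rw [Real.sqrt_mul (by norm_num), Real.sqrt_sq hγ0]

/-- TV bound between products of oppositely biased Bernoullis, via the KL chain rule
and Pinsker's inequality. -/
theorem tv_product_bernoulli {ι : Type*} [Fintype ι] (δ : ι → ℝ) (γ : ℝ)
    (hδ0 : ∀ s, 0 ≤ δ s) (hδ1 : ∀ s, δ s ≤ 1/4)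
    (hγ0 : 0 ≤ γ) (hsum : ∑ s, δ s ^ 2 ≤ γ ^ 2) (hγ : 12 * γ ^ 2 ≤ 1) :
    tvDist (Measure.pi fun s : ι => bernMeasure (1/2 - δ s))
        (Measure.pi fun s : ι => bernMeasure (1/2 + δ s))
      ≤ Real.sqrt (6 * ∑ s, δ s ^ 2) ∧
    Real.sqrt (6 * ∑ s, δ s ^ 2) ≤ Real.sqrt 6 * γ :=
  tv_product_bernoulli_general δ γ hδ0 hδ1 hγ0 hsum
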